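/- Define c₂(s) = (√b/(2√π)) erfc(√2 s) + √b (e^{−s²}/√(2π))(1 − erfc(s)) + (√b s/√2) erfc(s)((1/2)erfc(s) − 1) for a fixed b > 0. Then c₂'(s) = 2^{−3/2} √b (erfc(s) − 2) erfc(s) < 0 for all s ∈ ℝ, lim_{s→+∞} c₂(s) = 0, and consequently c₂(s) > 0 for all s ∈ ℝ. -/

import Mathlib

open MeasureTheory Real Filter

noncomputable def erfc (t : ℝ) : ℝ :=
  (2 / Real.sqrt Real.pi) * ∫ x in Set.Ioi t, Real.exp (-x ^ 2)

noncomputable def c2 (b s : ℝ) : ℝ :=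
  (Real.sqrt b / (2 * Real.sqrt Real.pi)) * erfc (Real.sqrt 2 * s) +
    Real.sqrt b * (Real.exp (-s ^ 2) / Real.sqrt (2 * Real.pi)) * (1 - erfc s) +
    (Real.sqrt b * s / Real.sqrt 2) * erfc s * ((1 / 2) * erfc s - 1)

/-! The derivative of `c2 b` collapses to `2^(-3/2) √b (erfc s - 2) erfc s`: the `e^{-2s²}` terms
coming from `erfc (√2 s)` and from `e^{-s²} (1 - erfc s)` cancel, and so do the two `s e^{-s²}`
terms. Since `0 < erfc < 2` this is negative, so `c2 b` is strictly decreasing; its limit at `+∞`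
is `0` because `erfc s`, `e^{-s²}` and `s erfc s` all vanish there (the last by the Mills-ratio
bound `s erfc s ≤ e^{-s²}/√π`). A strictly decreasing function with limit `0` is positive. -/

open Set
open scoped Topology

theorem StrictAnti.lt_of_tendsto {α β : Type*} [TopologicalSpace α] [Preorder α]
    [OrderClosedTopology α] [LinearOrder β] [NoMaxOrder β] {f : β → α} {a : α}
    (hf : StrictAnti f) (ha : Tendsto f atTop (𝓝 a)) (b : β) : a < f b := by
  obtain ⟨c, hbc⟩ := exists_gt b
  exact (hf.antitone.le_of_tendsto ha c).trans_lt (hf hbc)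

theorem setIntegral_pos_of_pos {X : Type*} [MeasurableSpace X] {μ : Measure X} {s : Set X}
    {f : X → ℝ} (hs : μ s ≠ 0) (hf : IntegrableOn f s μ) (hpos : ∀ x, 0 < f x) :
    0 < ∫ x in s, f x ∂μ := by
  have hsupp : Function.support f = univ := eq_univ_of_forall fun x => (hpos x).ne'
  rw [setIntegral_pos_iff_support_of_nonneg_ae (.of_forall fun x => (hpos x).le) hf, hsupp,
    univ_inter]
  exact pos_iff_ne_zero.mpr hs

theorem hasDerivAt_integral_Ioi {E : Type*} [NormedAddCommGroup E] [NormedSpace ℝ E]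
    [CompleteSpace E] {f : ℝ → E} {t : ℝ} (hf : Integrable f) (hcont : ContinuousAt f t) :
    HasDerivAt (fun u => ∫ x in Ioi u, f x) (-f t) t := by
  have hsplit :
      (fun u => ∫ x in Ioi u, f x) = fun u => (∫ x in Ioi t, f x) - ∫ x in t..u, f x := by
    funext u
    rw [← intervalIntegral.integral_Ioi_sub_Ioi' hf.integrableOn hf.integrableOn, sub_sub_cancel]
  rw [hsplit]
  exact (intervalIntegral.integral_hasDerivAt_right hf.intervalIntegrable
    hf.aestronglyMeasurable.stronglyMeasurableAtFilter hcont).const_sub _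

theorem integrable_exp_neg_sq : Integrable fun x : ℝ => exp (-x ^ 2) := by
  simpa using integrable_exp_neg_mul_sq one_pos

theorem integrable_mul_exp_neg_sq : Integrable fun x : ℝ => x * exp (-x ^ 2) := by
  simpa using integrable_mul_exp_neg_mul_sq one_pos

theorem integral_exp_neg_sq : ∫ x : ℝ, exp (-x ^ 2) = √π := by
  simpa using integral_gaussian 1

theorem hasDerivAt_exp_neg_sq (x : ℝ) :
    HasDerivAt (fun x => exp (-x ^ 2)) (-(2 * x) * exp (-x ^ 2)) x := by
  simpa [mul_comm] using ((hasDerivAt_pow 2 x).neg).exp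

theorem tendsto_exp_neg_sq_atTop : Tendsto (fun x : ℝ => exp (-x ^ 2)) atTop (𝓝 0) :=
  tendsto_exp_comp_nhds_zero.mpr <| tendsto_neg_atTop_atBot.comp (tendsto_pow_atTop two_ne_zero)

theorem integral_Ioi_mul_exp_neg_sq (a : ℝ) :
    ∫ x in Ioi a, x * exp (-x ^ 2) = exp (-a ^ 2) / 2 := by
  have hderiv (x : ℝ) (_ : x ∈ Ici a) :
      HasDerivAt (fun y => -exp (-y ^ 2) / 2) (x * exp (-x ^ 2)) x :=
    ((hasDerivAt_exp_neg_sq x).neg.div_const 2).congr_deriv (by ring)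
  have hlim : Tendsto (fun y : ℝ => -exp (-y ^ 2) / 2) atTop (𝓝 0) := by
    simpa using tendsto_exp_neg_sq_atTop.neg.div_const 2
  rw [integral_Ioi_of_hasDerivAt_of_tendsto' hderiv integrable_mul_exp_neg_sq.integrableOn hlim]
  ring

theorem hasDerivAt_erfc (t : ℝ) : HasDerivAt erfc (-(2 / √π) * exp (-t ^ 2)) t :=
  ((hasDerivAt_integral_Ioi integrable_exp_neg_sq (by fun_prop)).const_mul (2 / √π)).congr_deriv
    (by ring)

theorem erfc_pos (t : ℝ) : 0 < erfc t :=
  mul_pos (by positivity)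
    (setIntegral_pos_of_pos (by simp) integrable_exp_neg_sq.integrableOn fun _ => exp_pos _)

theorem erfc_lt_two (t : ℝ) : erfc t < 2 := by
  have hleft : 0 < ∫ x in Iic t, exp (-x ^ 2) :=
    setIntegral_pos_of_pos (by simp) integrable_exp_neg_sq.integrableOn fun _ => exp_pos _
  have hsum := intervalIntegral.integral_Iic_add_Ioi (b := t)
    integrable_exp_neg_sq.integrableOn integrable_exp_neg_sq.integrableOn (μ := volume)
  rw [integral_exp_neg_sq] at hsum
  have hπ : 0 < √π := sqrt_pos.mpr pi_pos
  rw [erfc, div_mul_eq_mul_div, div_lt_iff₀ hπ]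
  linarith

/-- Mills' ratio bound: on `(s, ∞)` the Gaussian is dominated by `(x / s) e^{-x²}`. -/
theorem mul_erfc_le {s : ℝ} (hs : 0 < s) : s * erfc s ≤ exp (-s ^ 2) / √π := by
  have hint : IntegrableOn (fun x : ℝ => x / s * exp (-x ^ 2)) (Ioi s) := by
    simp_rw [div_mul_eq_mul_div]
    exact (integrable_mul_exp_neg_sq.div_const s).integrableOn
  have hmono : ∫ x in Ioi s, exp (-x ^ 2) ≤ ∫ x in Ioi s, x / s * exp (-x ^ 2) := by
    refine setIntegral_mono_on integrable_exp_neg_sq.integrableOn hint measurableSet_Ioi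
      fun x hx => le_mul_of_one_le_left (exp_pos _).le ?_
    exact (one_le_div hs).mpr (le_of_lt hx)
  have htail : ∫ x in Ioi s, x / s * exp (-x ^ 2) = exp (-s ^ 2) / 2 / s := by
    simp_rw [div_mul_eq_mul_div]
    rw [integral_div, integral_Ioi_mul_exp_neg_sq]
  rw [htail] at hmono
  calc s * erfc s ≤ s * (2 / √π * (exp (-s ^ 2) / 2 / s)) := by unfold erfc; gcongr
    _ = exp (-s ^ 2) / √π := by field_simp

theorem tendsto_mul_erfc_atTop : Tendsto (fun s => s * erfc s) atTop (𝓝 0) := by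
  refine squeeze_zero' ?_ ?_ (by simpa using tendsto_exp_neg_sq_atTop.div_const √π)
  · filter_upwards [eventually_ge_atTop 0] with s hs using mul_nonneg hs (erfc_pos s).le
  · filter_upwards [eventually_gt_atTop 0] with s hs using mul_erfc_le hs

theorem tendsto_erfc_atTop : Tendsto erfc atTop (𝓝 0) := by
  refine squeeze_zero' (.of_forall fun s => (erfc_pos s).le) ?_ tendsto_mul_erfc_atTop
  filter_upwards [eventually_ge_atTop 1] with s hs
  nlinarith [erfc_pos s]

theorem two_rpow_neg_three_halves : (2 : ℝ) ^ (-(3 : ℝ) / 2) = (2 * √2)⁻¹ := by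
  rw [neg_div, rpow_neg zero_le_two, show (3 : ℝ) / 2 = 1 + 1 / 2 by norm_num,
    rpow_add zero_lt_two, rpow_one, sqrt_eq_rpow]

theorem hasDerivAt_c2 (b s : ℝ) :
    HasDerivAt (c2 b) ((2 : ℝ) ^ (-(3 : ℝ) / 2) * √b * (erfc s - 2) * erfc s) s := by
  have hE := hasDerivAt_erfc s
  have hG := hasDerivAt_exp_neg_sq s
  have h1 := ((hasDerivAt_erfc (√2 * s)).comp s ((hasDerivAt_id s).const_mul √2)).const_mul
    (√b / (2 * √π))
  have h2 := (hG.const_mul (√b / √(2 * π))).mul ((hasDerivAt_const s 1).sub hE)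
  have h3 := ((((hasDerivAt_id s).const_mul (√b / √2)).mul hE).mul
    ((hE.const_mul (1 / 2)).sub_const 1))
  refine ((h1.add h2).add h3).congr_of_eventuallyEq (.of_forall fun u => ?_) |>.congr_deriv ?_
  · simp only [c2, Pi.add_apply, Pi.mul_apply, Pi.sub_apply, id, Function.comp]
    ring
  have h2sq : √2 * √2 = 2 := mul_self_sqrt zero_le_two
  have hexp2 : exp (-(√2 * s) ^ 2) = exp (-s ^ 2) * exp (-s ^ 2) := by
    rw [← exp_add, mul_pow, sq √2, h2sq]
    ring_nf
  rw [two_rpow_neg_three_halves, hexp2, sqrt_mul zero_le_two]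
  simp only [Pi.mul_apply, Pi.sub_apply, id]
  field_simp
  linear_combination (-(2 : ℝ) * √b * exp (-s ^ 2) ^ 2) * h2sq

theorem tendsto_c2_atTop (b : ℝ) : Tendsto (c2 b) atTop (𝓝 0) := by
  have hscaled : Tendsto (fun s => erfc (√2 * s)) atTop (𝓝 0) :=
    tendsto_erfc_atTop.comp (tendsto_id.const_mul_atTop (by positivity))
  have hlim := ((hscaled.const_mul (√b / (2 * √π))).add
    ((tendsto_exp_neg_sq_atTop.const_mul (√b / √(2 * π))).mul
      (tendsto_erfc_atTop.const_sub 1))).add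
    ((tendsto_mul_erfc_atTop.const_mul (√b / √2)).mul
      ((tendsto_erfc_atTop.const_mul (1 / 2)).sub_const 1))
  simp only [mul_zero, zero_mul, add_zero] at hlim
  refine hlim.congr fun s => ?_
  simp only [c2]
  ring

theorem c2_deriv_neg_and_pos (b : ℝ) (hb : 0 < b) :
    (∀ s : ℝ,
      HasDerivAt (c2 b) ((2 : ℝ) ^ (-(3 : ℝ) / 2) * Real.sqrt b * (erfc s - 2) * erfc s) s ∧
      (2 : ℝ) ^ (-(3 : ℝ) / 2) * Real.sqrt b * (erfc s - 2) * erfc s < 0) ∧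
    Tendsto (c2 b) atTop (nhds 0) ∧
    ∀ s : ℝ, 0 < c2 b s := by
  have hneg (s : ℝ) : (2 : ℝ) ^ (-(3 : ℝ) / 2) * √b * (erfc s - 2) * erfc s < 0 :=
    mul_neg_of_neg_of_pos
      (mul_neg_of_pos_of_neg (by positivity) (sub_neg.mpr (erfc_lt_two s))) (erfc_pos s)
  have hanti : StrictAnti (c2 b) := strictAnti_of_hasDerivAt_neg (hasDerivAt_c2 b) hneg
  exact ⟨fun s => ⟨hasDerivAt_c2 b s, hneg s⟩, tendsto_c2_atTop b,
    hanti.lt_of_tendsto (tendsto_c2_atTop b)⟩
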